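/- Let c : ℝⁿ → ℝᵐ be continuously differentiable with Jacobian J, and let x ∈ ℝⁿ be such that J(x) has full row rank. If s = 0 is a global minimizer of the function s ↦ ‖c(x) + J(x) s‖₂ + (1/2)‖s‖₂², then c(x) = 0. -/

import Mathlib

/-!
Surjectivity of `J(x)` gives a Newton step `s` with `J(x) s = -c(x)`. Along `t s`, `t ∈ [0, 1]`, the
model equals `(1 - t) ‖c(x)‖ + (t² / 2) ‖s‖²`: the residual term decreases linearly in `t` while the
regularization grows only quadratically, so minimality at `t = 0` forces `‖c(x)‖ ≤ (t / 2) ‖s‖²`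
for every small `t > 0`, i.e. `c(x) = 0`.
-/

open Filter Topology

lemma nonpos_of_forall_le_mul {a C : ℝ} (h : ∀ t : ℝ, 0 < t → t ≤ 1 → a ≤ t * C) : a ≤ 0 := by
  have hlim : Tendsto (fun t : ℝ => t * C) (𝓝[>] 0) (𝓝 0) :=
    ((continuous_mul_const C).tendsto' 0 0 (zero_mul C)).mono_left nhdsWithin_le_nhds
  refine ge_of_tendsto hlim ?_
  filter_upwards [Ioo_mem_nhdsGT one_pos] with t ht using h t ht.1 ht.2.le

section ProximalModel

variable {E F : Type*} [NormedAddCommGroup E] [NormedSpace ℝ E]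
  [NormedAddCommGroup F] [NormedSpace ℝ F]

lemma proximalModel_smul_of_apply_eq_neg (L : E →L[ℝ] F) {b : F} {s : E} (hs : L s = -b)
    {t : ℝ} (ht₀ : 0 ≤ t) (ht₁ : t ≤ 1) :
    ‖b + L (t • s)‖ + 1 / 2 * ‖t • s‖ ^ 2 = (1 - t) * ‖b‖ + t ^ 2 * (1 / 2 * ‖s‖ ^ 2) := by
  have hres : b + L (t • s) = (1 - t) • b := by
    rw [map_smul, hs]; module
  rw [hres, norm_smul, norm_smul, Real.norm_of_nonneg (sub_nonneg.mpr ht₁),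
    Real.norm_of_nonneg ht₀]
  ring

lemma eq_zero_of_forall_norm_le_proximalModel (L : E →L[ℝ] F) {b : F}
    (hb : b ∈ LinearMap.range (L : E →ₗ[ℝ] F))
    (hmin : ∀ s : E, ‖b‖ ≤ ‖b + L s‖ + 1 / 2 * ‖s‖ ^ 2) : b = 0 := by
  obtain ⟨s, hs⟩ := (LinearMap.range (L : E →ₗ[ℝ] F)).neg_mem hb
  have hdecr : ∀ t : ℝ, 0 < t → t ≤ 1 → ‖b‖ ≤ t * (1 / 2 * ‖s‖ ^ 2) := by
    intro t ht₀ ht₁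
    have := hmin (t • s)
    rw [proximalModel_smul_of_apply_eq_neg L hs ht₀.le ht₁] at this
    nlinarith
  exact norm_le_zero_iff.mp (nonpos_of_forall_le_mul hdecr)

end ProximalModel

theorem stmt_3 {n m : ℕ}
    (c : EuclideanSpace ℝ (Fin n) → EuclideanSpace ℝ (Fin m))
    (x : EuclideanSpace ℝ (Fin n))
    (hrank : Function.Surjective ⇑(fderiv ℝ c x))
    (hmin : ∀ s : EuclideanSpace ℝ (Fin n),
      ‖c x + fderiv ℝ c x 0‖ + 1 / 2 * ‖(0 : EuclideanSpace ℝ (Fin n))‖ ^ 2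
        ≤ ‖c x + fderiv ℝ c x s‖ + 1 / 2 * ‖s‖ ^ 2) :
    c x = 0 :=
  eq_zero_of_forall_norm_le_proximalModel (fderiv ℝ c x) (LinearMap.mem_range.mpr (hrank _))
    fun s => by simpa using hmin s
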